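/- arXiv:1106.6079 — 2 statements merged into one kernel-verified Lean document; each statement's English description precedes it below -/
import Mathlib

section
/- Let a and b be regular fractional ideals of O with b ⊆ a, let c be a canonical ideal of O, and set a* := c : a and b* := c : b. Then b ∩ a* ⊆ b* ∩ a and λ((b* ∩ a) / (b ∩ a*)) = λ(a / b). (Lemma 4.14) -/
/-- The length of the `O`-module `A ⧸ B` (the supremum of lengths of chains of
`O`-submodules of the quotient). -/
noncomputable def olen (O : Type) {K : Type} [CommRing O] [CommRing K] [Algebra O K]
    (A B : Submodule O K) : WithBot (WithTop ℕ) :=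
  Order.krullDim (Submodule O (↥A ⧸ (Submodule.comap A.subtype B)))

/-- `b` is a fractional ideal of `O` in `K`: a nonzero `O`-submodule of `K` admitting a
regular denominator in `O`. -/
def IsFracIdeal {O K : Type} [CommRing O] [CommRing K] [Algebra O K]
    (b : Submodule O K) : Prop :=
  b ≠ ⊥ ∧ ∃ x ∈ nonZeroDivisors O, ∀ z ∈ b, x • z ∈ (1 : Submodule O K)

/-- `b` is a regular fractional ideal of `O`: a fractional ideal with `b · K = K`. -/
def IsRegularFrac {O K : Type} [CommRing O] [CommRing K] [Algebra O K]
    (b : Submodule O K) : Prop :=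
  IsFracIdeal b ∧ Submodule.span K (b : Set K) = ⊤

/-- `c` is a canonical ideal of `O`: a regular fractional ideal with `a = c : (c : a)` for
every regular fractional ideal `a`. -/
def IsCanonicalCM {O K : Type} [CommRing O] [CommRing K] [Algebra O K]
    (c : Submodule O K) : Prop :=
  IsRegularFrac c ∧ ∀ a : Submodule O K, IsRegularFrac a → a = c / (c / a)

/-- `b` is self-dual: `b = c : b` for some canonical ideal `c`. -/
def IsSelfDualCM {O K : Type} [CommRing O] [CommRing K] [Algebra O K]
    (b : Submodule O K) : Prop :=
  ∃ c : Submodule O K, IsCanonicalCM c ∧ b = c / b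

/-!
Write `x*` for `c / x` and put `Z := b ⊓ a*`, `X := b* ⊓ a`, `Y := (a ⊓ b*) ⊔ b`, so that
`Z ≤ b ⊓ b* ≤ X` and `b ≤ Y ≤ a`. Lengths are Krull dimensions of intervals in the modular
lattice of submodules, hence additive along chains and invariant under the diamond isomorphism
`[x ⊓ y, x] ≃ [y, x ⊔ y]`; the latter identifies `[b ⊓ b*, X]` with `[b, Y]` and `[Z, b ⊓ b*]`
with `[a*, a* ⊔ (b ⊓ b*)]`. Duality reverses inclusions between regular fractional ideals and
turns intersections into sums, so `Y* = (a* ⊔ b) ⊓ b* = a* ⊔ (b ⊓ b*)` and `[Y, a]` is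
anti-isomorphic to `[a*, a* ⊔ (b ⊓ b*)]`. Hence `λ(X/Z) = λ(Y/b) + λ(a/Y) = λ(a/b)`.
-/

open Order Set

namespace Order

variable {α β γ : Type*} [Preorder α] [Preorder β] [Preorder γ]

lemma length_le_height_add_height {f : α → β} {g : α → γ} (hf : Monotone f)
    (hg : Monotone g) (hfg : ∀ ⦃x y⦄, x < y → f x < f y ∨ g x < g y) (p : LTSeries α) :
    (p.length : ℕ∞) ≤ height (f p.last) + height (g p.last) := by
  induction p using RelSeries.inductionOn' with
  | singleton x => simp
  | snoc p x hx ih =>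
    rw [RelSeries.snoc_length, RelSeries.last_snoc, Nat.cast_add_one]
    rcases hfg hx with hlt | hlt
    · calc (p.length : ℕ∞) + 1 ≤ height (f p.last) + 1 + height (g p.last) := by
            rw [add_right_comm]; gcongr
        _ ≤ height (f x) + height (g x) :=
            add_le_add (height_add_one_le hlt) (height_mono (hg hx.le))
    · calc (p.length : ℕ∞) + 1 ≤ height (f p.last) + (height (g p.last) + 1) := by
            rw [← add_assoc]; gcongr
        _ ≤ height (f x) + height (g x) :=
            add_le_add (height_mono (hf hx.le)) (height_add_one_le hlt)

lemma krullDim_le_add_of_monotone {f : α → β} {g : α → γ} (hf : Monotone f)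
    (hg : Monotone g) (hfg : ∀ ⦃x y⦄, x < y → f x < f y ∨ g x < g y) :
    krullDim α ≤ krullDim β + krullDim γ := by
  refine iSup_le fun p => ?_
  calc (p.length : WithBot ℕ∞)
        ≤ ((height (f p.last) + height (g p.last) : ℕ∞) : WithBot ℕ∞) :=
        WithBot.coe_le_coe.mpr (length_le_height_add_height hf hg hfg p)
    _ ≤ krullDim β + krullDim γ := by
        rw [WithBot.coe_add]
        exact add_le_add (height_le_krullDim _) (height_le_krullDim _)

end Order

lemma krullDim_Icc_add_le {α : Type*} [PartialOrder α] {x y z : α} (hxy : x ≤ y)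
    (hyz : y ≤ z) :
    krullDim (Icc x y) + krullDim (Icc y z) ≤ krullDim (Icc x z) := by
  let Y : Icc x z := ⟨y, hxy, hyz⟩
  have hheight : krullDim (Icc x y) ≤ height Y := by
    rw [height_eq_krullDim_Iic]
    exact krullDim_le_of_strictMono (fun w => ⟨⟨w, w.2.1, w.2.2.trans hyz⟩, w.2.2⟩)
      fun _ _ h => h
  have hcoheight : krullDim (Icc y z) ≤ coheight Y := by
    rw [coheight_eq_krullDim_Ici]
    exact krullDim_le_of_strictMono (fun w => ⟨⟨w, hxy.trans w.2.1, w.2.2⟩, w.2.1⟩)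
      fun _ _ h => h
  have : Nonempty (Icc x z) := ⟨Y⟩
  calc krullDim (Icc x y) + krullDim (Icc y z) ≤ (height Y : WithBot ℕ∞) + coheight Y :=
        add_le_add hheight hcoheight
    _ ≤ krullDim (Icc x z) := by
        rw [krullDim_eq_iSup_height_add_coheight_of_nonempty, ← WithBot.coe_add]
        exact WithBot.coe_le_coe.mpr (le_iSup (fun a => height a + coheight a) Y)

lemma inf_lt_inf_or_sup_lt_sup {α : Type*} [Lattice α] [IsModularLattice α] {x z : α} (y : α)
    (h : x < z) : x ⊓ y < z ⊓ y ∨ x ⊔ y < z ⊔ y := by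
  by_contra! hn
  refine h.ne (eq_of_le_of_inf_le_of_sup_le (z := y) h.le ?_ ?_)
  · exact ((inf_le_inf_right y h.le).not_lt_iff_eq.mp hn.1).ge
  · exact ((sup_le_sup_right h.le y).not_lt_iff_eq.mp hn.2).ge

lemma krullDim_Icc_eq_add {α : Type*} [Lattice α] [IsModularLattice α] {x y z : α}
    (hxy : x ≤ y) (hyz : y ≤ z) :
    krullDim (Icc x z) = krullDim (Icc x y) + krullDim (Icc y z) := by
  refine le_antisymm ?_ (krullDim_Icc_add_le hxy hyz)
  exact krullDim_le_add_of_monotone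
    (f := fun w : Icc x z => (⟨w ⊓ y, le_inf w.2.1 hxy, inf_le_right⟩ : Icc x y))
    (g := fun w => (⟨w ⊔ y, le_sup_right, sup_le w.2.2 hyz⟩ : Icc y z))
    (fun _ _ h => inf_le_inf_right y h) (fun _ _ h => sup_le_sup_right (α := α) h y)
    fun _ _ h => inf_lt_inf_or_sup_lt_sup y h

namespace Submodule

variable {R M : Type*} [Ring R] [AddCommGroup M] [Module R M]

def iciComapOrderIsoIcc {A B : Submodule R M} (h : B ≤ A) :
    Ici (B.comap A.subtype) ≃o Icc B A where
  toFun q := ⟨q.1.map A.subtype, by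
      simpa only [map_comap_subtype, inf_eq_right.mpr h] using map_mono (f := A.subtype) q.2,
    map_subtype_le A q.1⟩
  invFun w := ⟨w.1.comap A.subtype, comap_mono w.2.1⟩
  left_inv q := Subtype.ext (comap_map_eq_of_injective A.injective_subtype q.1)
  right_inv w := Subtype.ext (by simp only [map_comap_subtype, inf_eq_right.mpr w.2.2])
  map_rel_iff' := map_le_map_iff_of_injective A.injective_subtype _ _

end Submodule

lemma olen_eq_krullDim_Icc {O K : Type} [CommRing O] [CommRing K] [Algebra O K]
    {A B : Submodule O K} (h : B ≤ A) : olen O A B = krullDim (Icc B A) :=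
  krullDim_eq_of_orderIso ((Submodule.comapMkQRelIso _).trans (Submodule.iciComapOrderIsoIcc h))

namespace Submodule

variable {R A : Type*} [CommSemiring R] [CommSemiring A] [Algebra R A]

lemma div_le_div_left (c : Submodule R A) {x y : Submodule R A} (h : x ≤ y) : c / y ≤ c / x :=
  le_div_iff_mul_le.mpr ((mul_le_mul_right h _).trans (le_div_iff_mul_le.mp le_rfl))

lemma div_sup (c x y : Submodule R A) : c / (x ⊔ y) = c / x ⊓ c / y :=
  eq_of_forall_le_iff fun _ => by simp only [le_inf_iff, le_div_iff_mul_le, mul_sup, sup_le_iff]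

end Submodule

section Regular

variable {O K : Type} [CommRing O] [CommRing K] [Algebra O K]

lemma IsRegularFrac.nontrivial {x : Submodule O K} (hx : IsRegularFrac x) : Nontrivial K := by
  obtain ⟨z, -, hz⟩ := (Submodule.ne_bot_iff x).mp hx.1.1
  exact nontrivial_of_ne z 0 hz

lemma IsRegularFrac.of_le_of_le {b x a : Submodule O K} (hb : IsRegularFrac b)
    (ha : IsRegularFrac a) (hbx : b ≤ x) (hxa : x ≤ a) : IsRegularFrac x := by
  obtain ⟨d, hd, hda⟩ := ha.1.2
  refine ⟨⟨ne_bot_of_le_ne_bot hb.1.1 hbx, d, hd, fun z hz => hda z (hxa hz)⟩, ?_⟩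
  exact eq_top_iff.mpr (hb.2 ▸ Submodule.span_mono hbx)

lemma IsRegularFrac.sup {x y : Submodule O K} (hx : IsRegularFrac x) (hy : IsRegularFrac y) :
    IsRegularFrac (x ⊔ y) := by
  obtain ⟨d, hd, hdx⟩ := hx.1.2
  obtain ⟨e, he, hey⟩ := hy.1.2
  refine ⟨⟨ne_bot_of_le_ne_bot hx.1.1 le_sup_left, d * e, mul_mem hd he, fun z hz => ?_⟩,
    eq_top_iff.mpr (hx.2 ▸ Submodule.span_mono (le_sup_left (b := y)))⟩
  obtain ⟨u, hu, v, hv, rfl⟩ := Submodule.mem_sup.mp hz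
  rw [smul_add, mul_comm, mul_smul, mul_comm, mul_smul]
  exact add_mem (Submodule.smul_mem _ _ (hdx u hu)) (Submodule.smul_mem _ _ (hey v hv))

variable [IsLocalization (nonZeroDivisors O) K]

lemma IsRegularFrac.exists_algebraMap_mem {x : Submodule O K} (hx : IsRegularFrac x) :
    ∃ s ∈ nonZeroDivisors O, algebraMap O K s ∈ x := by
  have h1 : (1 : K) ∈ Submodule.span K (x : Set K) := hx.2 ▸ Submodule.mem_top
  obtain ⟨y, hy, s, hys⟩ := (IsLocalization.mem_span_iff (nonZeroDivisors O)).mp h1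
  refine ⟨s, s.2, ?_⟩
  rw [Submodule.span_eq] at hy
  rw [smul_eq_mul] at hys
  have : algebraMap O K s = y := by
    rw [← mul_one (algebraMap O K s), hys, ← mul_assoc, IsLocalization.mk'_spec', map_one,
      one_mul]
  exact this ▸ hy

lemma isRegularFrac_of_algebraMap_mem [Nontrivial K] {x : Submodule O K} {s d : O}
    (hs : s ∈ nonZeroDivisors O) (hsx : algebraMap O K s ∈ x)
    (hd : d ∈ nonZeroDivisors O) (hdx : ∀ z ∈ x, d • z ∈ (1 : Submodule O K)) :
    IsRegularFrac x := by
  have hunit : IsUnit (algebraMap O K s) := IsLocalization.map_units K ⟨s, hs⟩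
  refine ⟨⟨(Submodule.ne_bot_iff x).mpr ⟨_, hsx, hunit.ne_zero⟩, d, hd, hdx⟩, ?_⟩
  exact Ideal.eq_top_of_isUnit_mem _ (Submodule.subset_span hsx) hunit

lemma IsRegularFrac.div {c x : Submodule O K} (hc : IsRegularFrac c) (hx : IsRegularFrac x) :
    IsRegularFrac (c / x) := by
  have := hc.nontrivial
  obtain ⟨t, ht, htc⟩ := hc.exists_algebraMap_mem
  obtain ⟨s, hs, hsx⟩ := hx.exists_algebraMap_mem
  obtain ⟨e, he, hec⟩ := hc.1.2
  obtain ⟨d, hd, hdx⟩ := hx.1.2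
  refine isRegularFrac_of_algebraMap_mem (s := d * t) (mul_mem hd ht) ?_ (mul_mem he hs) ?_
  · refine fun y hy => ?_
    obtain ⟨o, ho⟩ := Submodule.mem_one.mp (hdx y hy)
    have : algebraMap O K (d * t) * y = o • algebraMap O K t := by
      rw [map_mul, Algebra.smul_def, ho, Algebra.smul_def]; ring
    exact this ▸ Submodule.smul_mem _ o htc
  · refine fun z hz => ?_
    rw [mul_smul, Algebra.smul_def s, mul_comm]
    exact hec _ (hz _ hsx)

end Regular

namespace IsCanonicalCM

variable {O K : Type} [CommRing O] [CommRing K] [Algebra O K] {c : Submodule O K}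

lemma div_div (hc : IsCanonicalCM c) {x : Submodule O K} (hx : IsRegularFrac x) :
    c / (c / x) = x :=
  (hc.2 x hx).symm

variable [IsLocalization (nonZeroDivisors O) K]

lemma div_inf (hc : IsCanonicalCM c) {x y : Submodule O K} (hx : IsRegularFrac x)
    (hy : IsRegularFrac y) : c / (x ⊓ y) = c / x ⊔ c / y := by
  calc c / (x ⊓ y) = c / (c / (c / x ⊔ c / y)) := by
        rw [Submodule.div_sup, hc.div_div hx, hc.div_div hy]
    _ = c / x ⊔ c / y := hc.div_div ((hc.1.div hx).sup (hc.1.div hy))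

lemma krullDim_Icc_div (hc : IsCanonicalCM c) {u v : Submodule O K} (hu : IsRegularFrac u)
    (hv : IsRegularFrac v) :
    krullDim (Icc (c / v) (c / u)) = krullDim (Icc u v) := by
  have hdiv : ∀ w : Icc u v, c / (c / w.1) = w.1 :=
    fun w => hc.div_div (hu.of_le_of_le hv w.2.1 w.2.2)
  have hdiv' : ∀ w : Icc (c / v) (c / u), c / (c / w.1) = w.1 :=
    fun w => hc.div_div ((hc.1.div hv).of_le_of_le (hc.1.div hu) w.2.1 w.2.2)
  let e : Icc u v ≃o (Icc (c / v) (c / u))ᵒᵈ :=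
    { toFun w := OrderDual.toDual
        ⟨c / w, Submodule.div_le_div_left c w.2.2, Submodule.div_le_div_left c w.2.1⟩
      invFun w := ⟨c / (OrderDual.ofDual w).1,
        (hc.div_div hu).ge.trans (Submodule.div_le_div_left c (OrderDual.ofDual w).2.2),
        (Submodule.div_le_div_left c (OrderDual.ofDual w).2.1).trans (hc.div_div hv).le⟩
      left_inv w := Subtype.ext (hdiv w)
      right_inv w := Subtype.ext (hdiv' (OrderDual.ofDual w))
      map_rel_iff' {w w'} := ⟨fun h =>
        (hdiv w).ge.trans ((Submodule.div_le_div_left c h).trans (hdiv w').le),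
        Submodule.div_le_div_left c⟩ }
  rw [krullDim_eq_of_orderIso e, krullDim_orderDual]

end IsCanonicalCM

theorem statement_3_general (O K : Type)
    [CommRing O] [CommRing K] [Algebra O K] [IsLocalization (nonZeroDivisors O) K]
    (a : Submodule O K) (ha : IsRegularFrac a)
    (b : Submodule O K) (hb : IsRegularFrac b) (hba : b ≤ a)
    (c : Submodule O K) (hc : IsCanonicalCM c) :
    b ⊓ (c / a) ≤ (c / b) ⊓ a ∧ olen O ((c / b) ⊓ a) (b ⊓ (c / a)) = olen O a b := by
  have hab : c / a ≤ c / b := Submodule.div_le_div_left c hba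
  refine ⟨le_inf (inf_le_right.trans hab) (inf_le_left.trans hba), ?_⟩
  set Y := a ⊓ c / b ⊔ b
  have hbY : b ≤ Y := le_sup_right
  have hYa : Y ≤ a := sup_le inf_le_left hba
  have hdualY : c / Y = c / a ⊔ b ⊓ c / b := by
    rw [Submodule.div_sup, hc.div_inf ha (hc.1.div hb), hc.div_div hb, sup_inf_assoc_of_le b hab]
  have h1 : b ⊓ c / a ≤ b ⊓ c / b := inf_le_inf_left b hab
  have h2 : b ⊓ c / b ≤ c / b ⊓ a := le_inf inf_le_right (inf_le_left.trans hba)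
  rw [olen_eq_krullDim_Icc (h1.trans h2), olen_eq_krullDim_Icc hba, krullDim_Icc_eq_add h1 h2,
    krullDim_Icc_eq_add hbY hYa, add_comm]
  congr 1
  · have := krullDim_eq_of_orderIso (infIccOrderIsoIccSup (a ⊓ c / b) b)
    rw [inf_comm (c / b) a]
    rwa [inf_right_comm, inf_eq_right.mpr hba] at this
  · rw [← hc.krullDim_Icc_div (hb.of_le_of_le ha hbY hYa) ha, hdualY]
    have := krullDim_eq_of_orderIso (infIccOrderIsoIccSup (b ⊓ c / b) (c / a))
    rwa [inf_assoc, inf_eq_right.mpr hab, sup_comm] at this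

theorem statement_3 (k O K : Type) [Field k] [PerfectField k]
    [CommRing O] [IsNoetherianRing O] [IsLocalRing O] [Algebra k O]
    [CommRing K] [Algebra O K] [IsLocalization (nonZeroDivisors O) K]
    [Algebra k K] [IsScalarTower k O K]
    (hdim : ringKrullDim O = 1)
    (hCM : ∃ x ∈ IsLocalRing.maximalIdeal O, x ∈ nonZeroDivisors O)
    (hfin : Module.Finite O (integralClosure O K))
    (OB : Submodule O K) (hOB : OB = Subalgebra.toSubmodule (integralClosure O K))
    (a : Submodule O K) (ha : IsRegularFrac a)
    (b : Submodule O K) (hb : IsRegularFrac b) (hba : b ≤ a)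
    (c : Submodule O K) (hc : IsCanonicalCM c) :
    b ⊓ (c / a) ≤ (c / b) ⊓ a ∧ olen O ((c / b) ⊓ a) (b ⊓ (c / a)) = olen O a b :=
  statement_3_general O K a ha b hb hba c hc
end

section
/- Let c be a canonical ideal of O normalized so that c : Ō = Ō. Then for every v ∈ ℤ^r one has c : J^K(v) = J^K(−v), and deg(J^K(v)) = δ − (d_1 v_1 + ⋯ + d_r v_r). (Lemma 4.15(b),(c)) -/
/-!
Every `J^K(w)` is an `Ō`-module, so `c : J^K(w) = (c : Ō) : J^K(w) = Ō : J^K(w)`, and comparing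
valuations identifies `Ō : J^K(w)` with `J^K(-w)`. For the degree, take `z` with `v(z) ≥ w` and
`v_i(z) = w_i` (it exists by the Chinese remainder theorem): multiplication by `z` induces
`Ō/m_i ≅ J^K(w)/J^K(w + e_i)`, so `deg J^K(w) + ∑ d_i w_i` is invariant under `w ↦ w + e_i`,
hence constant, equal to `deg Ō = δ`.
-/

/-- The dimension over `k` of the quotient `A / B` of two `O`-submodules of `K`,
viewed as `k`-vector spaces. -/
noncomputable def qdim (k : Type) {O K : Type} [Field k] [CommRing O] [CommRing K]
    [Algebra k O] [Algebra O K] [Algebra k K] [IsScalarTower k O K]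
    (A B : Submodule O K) : ℕ :=
  Module.finrank k
    (↥(Submodule.restrictScalars k A) ⧸
      (Submodule.comap (Submodule.restrictScalars k A).subtype (Submodule.restrictScalars k B)))

/-- The `i`-th component of the value vector `v(a)` of a (fractional) ideal `a`:
the minimum of `v i` over the nonzero elements of `a`. -/
noncomputable def idealVal {O K : Type} [CommRing O] [CommRing K] [Algebra O K] {r : ℕ}
    (v : Fin r → K → ℤ) (a : Submodule O K) (i : Fin r) : ℤ :=
  sInf {n : ℤ | ∃ z ∈ a, z ≠ 0 ∧ v i z = n}

/-- `γ^b := v(b : Ō) - v(b·Ō)`. -/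
noncomputable def gammaB {O K : Type} [CommRing O] [CommRing K] [Algebra O K] {r : ℕ}
    (v : Fin r → K → ℤ) (Obar b : Submodule O K) : Fin r → ℤ :=
  fun i => idealVal v (b / Obar) i - idealVal v (b * Obar) i

/-- `c` is a canonical ideal of `O`: a fractional ideal with `a = c : (c : a)` for every
fractional ideal `a`. -/
def IsCanonicalIdeal {O K : Type} [CommRing O] [CommRing K] [Algebra O K]
    (c : Submodule O K) : Prop :=
  IsFracIdeal c ∧ ∀ a : Submodule O K, IsFracIdeal a → a = c / (c / a)

/-- `b` is self-dual: `b = c : b` for some canonical ideal `c`. -/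
def IsSelfDual {O K : Type} [CommRing O] [CommRing K] [Algebra O K]
    (b : Submodule O K) : Prop :=
  ∃ c : Submodule O K, IsCanonicalIdeal c ∧ b = c / b

/-- The value set `S(b) = { v(z) - v(b·Ō) | z ∈ b \ {0} }`. -/
def Sset {O K : Type} [CommRing O] [CommRing K] [Algebra O K] {r : ℕ}
    (v : Fin r → K → ℤ) (Obar b : Submodule O K) : Set (Fin r → ℤ) :=
  {w | ∃ z ∈ b, z ≠ 0 ∧ w = fun i => v i z - idealVal v (b * Obar) i}

/-- `Δ(n) = Δ_1(n) ∪ ⋯ ∪ Δ_r(n)` for a subset `S ⊆ ℤ^r`. -/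
def Delta {r : ℕ} (S : Set (Fin r → ℤ)) (n : Fin r → ℤ) : Set (Fin r → ℤ) :=
  {σ | σ ∈ S ∧ ∃ i, σ i = n i ∧ ∀ j, j ≠ i → n j < σ j}

/-- `S ⊆ ℤ^r` is symmetric if there is `τ` with `w ∈ S ↔ Δ(τ - w) = ∅` for all `w`. -/
def IsSymmetricSet {r : ℕ} (S : Set (Fin r → ℤ)) : Prop :=
  ∃ τ : Fin r → ℤ, ∀ w : Fin r → ℤ, w ∈ S ↔ Delta S (τ - w) = ∅

open Function nonZeroDivisors FractionalIdeal

theorem eq_of_forall_add_single_one {ι α : Type*} [Fintype ι] [DecidableEq ι]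
    {f : (ι → ℤ) → α} (h : ∀ w i, f (w + Pi.single i 1) = f w) (w : ι → ℤ) : f w = f 0 := by
  let S : AddSubgroup (ι → ℤ) :=
    { carrier := {u | ∀ w, f (w + u) = f w}
      zero_mem' := fun w => by rw [add_zero]
      add_mem' := fun {u u'} hu hu' w => by rw [← add_assoc, hu', hu]
      neg_mem' := fun {u} hu w => by rw [← hu, neg_add_cancel_right] }
  have hw : w ∈ S := by
    rw [← Finset.univ_sum_single w]
    refine AddSubgroup.sum_mem _ fun i _ => ?_
    rw [← mul_one (w i), ← smul_eq_mul, Pi.single_smul]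
    exact AddSubgroup.zsmul_mem S (fun u => h u i) _
  simpa using hw 0

theorem forall_add_single_one_le_iff {ι : Type*} [DecidableEq ι] {w u : ι → ℤ} {i : ι} :
    (∀ j, (w + Pi.single i 1 : ι → ℤ) j ≤ u j) ↔ w i < u i ∧ ∀ j, w j ≤ u j := by
  refine ⟨fun h => ⟨by simpa using h i, fun j => ?_⟩, fun ⟨hi, h⟩ j => ?_⟩ <;>
    rcases eq_or_ne j i with rfl | hj
  · simpa using (h j).trans' (by simp)
  · simpa [hj] using h j
  · simpa using hi
  · simpa [hj] using h j

theorem Ideal.exists_sub_one_mem_and_mem {R ι : Type*} [CommRing R] [Finite ι]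
    {M : ι → Ideal R} (hM : ∀ i, (M i).IsMaximal) (hinj : Injective M) (i : ι) :
    ∃ t, t - 1 ∈ M i ∧ ∀ j ≠ i, t ∈ M j := by
  classical
  have hcop : Pairwise (IsCoprime on M) := fun a b hab =>
    Ideal.isCoprime_iff_sup_eq.mpr ((hM a).coprime_of_ne (hM b) (hinj.ne hab))
  obtain ⟨t, ht⟩ := Ideal.exists_forall_sub_mem_ideal hcop (Pi.single i 1)
  exact ⟨t, by simpa using ht i, fun j hj => by simpa [hj] using ht j⟩

theorem Submodule.div_mul_eq_div_div {R A : Type*} [CommSemiring R] [CommSemiring A]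
    [Algebra R A] (I J L : Submodule R A) : I / (J * L) = I / L / J :=
  eq_of_forall_le_iff fun N => by simp only [le_div_iff_mul_le, mul_assoc]

theorem IsFractional.isFracIdeal {O K : Type} [CommRing O] [CommRing K] [Algebra O K]
    {b : Submodule O K} (hb : IsFractional O⁰ b) (h0 : b ≠ ⊥) : IsFracIdeal b := by
  obtain ⟨a, ha, hab⟩ := hb
  exact ⟨h0, a, ha, fun z hz => Submodule.mem_one.mpr (hab z hz)⟩

theorem isFracIdeal_one {O K : Type} [CommRing O] [Field K] [Algebra O K] [FaithfulSMul O K] :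
    IsFracIdeal (1 : Submodule O K) :=
  (isFractional_of_le_one _ le_rfl).isFracIdeal fun h =>
    one_ne_zero ((Submodule.mem_bot O).mp (h ▸ Submodule.one_le.mp le_rfl))

theorem qdim_eq_finrank_quotient (k : Type) {O K : Type} [Field k] [CommRing O] [CommRing K]
    [Algebra k O] [Algebra O K] [Algebra k K] [IsScalarTower k O K]
    {S : Subalgebra O K} {P : Ideal S} {A B : Submodule O K} {z : K}
    (hzA : ∀ u : S, z * u ∈ A) (hker : ∀ u : S, z * u ∈ B ↔ u ∈ P)
    (hsurj : ∀ y ∈ A, ∃ u : S, z * u - y ∈ B) :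
    qdim k A B = Module.finrank k (S ⧸ P) := by
  let mulZ : S →ₗ[k] A.restrictScalars k :=
    LinearMap.codRestrict (A.restrictScalars k)
      (LinearMap.mulLeft k z ∘ₗ (S.val.restrictScalars k).toLinearMap) hzA
  let g := ((B.restrictScalars k).comap (A.restrictScalars k).subtype).mkQ ∘ₗ mulZ
  have hg_ker : LinearMap.ker g = P.restrictScalars k := by
    ext u
    simp [g, mulZ, Submodule.Quotient.mk_eq_zero, hker]
  have hg_surj : Surjective g := by
    intro q
    obtain ⟨y, rfl⟩ := Submodule.Quotient.mk_surjective _ q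
    obtain ⟨u, hu⟩ := hsurj y y.2
    exact ⟨u, (Submodule.Quotient.eq _).mpr hu⟩
  rw [qdim, ← (g.quotKerEquivOfSurjective hg_surj).finrank_eq, hg_ker,
    (Submodule.Quotient.restrictScalarsEquiv k P).finrank_eq]

section Valuation

variable {K : Type*} [Field K] {v : K → ℤ}

theorem val_one (hmul : ∀ x y : K, x ≠ 0 → y ≠ 0 → v (x * y) = v x + v y) : v 1 = 0 := by
  have := hmul 1 1 one_ne_zero one_ne_zero
  rw [mul_one] at this
  omega

theorem val_pow (hmul : ∀ x y : K, x ≠ 0 → y ≠ 0 → v (x * y) = v x + v y) {x : K}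
    (hx : x ≠ 0) (n : ℕ) : v (x ^ n) = n * v x := by
  induction n with
  | zero => simpa using val_one hmul
  | succ n ih => rw [pow_succ, hmul _ _ (pow_ne_zero n hx) hx, ih]; push_cast; ring

theorem val_inv (hmul : ∀ x y : K, x ≠ 0 → y ≠ 0 → v (x * y) = v x + v y) {x : K}
    (hx : x ≠ 0) : v x⁻¹ = -v x := by
  have := hmul x x⁻¹ hx (inv_ne_zero hx)
  rw [mul_inv_cancel₀ hx, val_one hmul] at this
  omega

end Valuation

section ValuationFamily

variable {O K : Type*} [CommRing O] [Field K] [Algebra O K] {r : ℕ}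
  {M : Fin r → Ideal (integralClosure O K)} {v : Fin r → K → ℤ}

theorem exists_val_eq_zero_and_one_le
    (hMmax : ∀ i, (M i).IsMaximal) (hMinj : Injective M)
    (hvint : ∀ x : K, x ≠ 0 → (x ∈ integralClosure O K ↔ ∀ i, 0 ≤ v i x))
    (hvmax : ∀ (i : Fin r) (x : K) (hx : x ∈ integralClosure O K), x ≠ 0 →
      ((⟨x, hx⟩ : integralClosure O K) ∈ M i ↔ 1 ≤ v i x)) (i : Fin r) :
    ∃ t : integralClosure O K, (t : K) ≠ 0 ∧ t - 1 ∈ M i ∧ v i t = 0 ∧ ∀ j ≠ i, 1 ≤ v j t := by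
  obtain ⟨t, ht1, htj⟩ := Ideal.exists_sub_one_mem_and_mem hMmax hMinj i
  have htM : t ∉ M i := fun ht => (hMmax i).ne_top <|
    (Ideal.eq_top_iff_one _).mpr (by simpa using sub_mem ht ht1)
  have ht0 : (t : K) ≠ 0 := fun h => htM (ZeroMemClass.coe_eq_zero.mp h ▸ zero_mem _)
  refine ⟨t, ht0, ht1, ?_, fun j hj => (hvmax j t t.2 ht0).mp (htj j hj)⟩
  have := (hvint t ht0).mp t.2 i
  have := mt (hvmax i t t.2 ht0).mpr htM
  omega

theorem exists_pow_mul_val_ge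
    (hvmul : ∀ (i : Fin r) (x y : K), x ≠ 0 → y ≠ 0 → v i (x * y) = v i x + v i y)
    {i : Fin r} {t x : K} (ht : t ≠ 0) (hx : x ≠ 0) (htj : ∀ j ≠ i, 1 ≤ v j t)
    (b : Fin r → ℤ) : ∃ n : ℕ, ∀ j ≠ i, b j ≤ v j (x * t ^ n) := by
  refine ⟨∑ j, (b j - v j x).toNat, fun j hj => ?_⟩
  rw [hvmul j _ _ hx (pow_ne_zero _ ht), val_pow (hvmul j) ht]
  have hle : b j - v j x ≤ ((∑ j, (b j - v j x).toNat : ℕ) : ℤ) :=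
    (Int.self_le_toNat _).trans <| Nat.cast_le.mpr <|
      Finset.single_le_sum (f := fun j => (b j - v j x).toNat) (fun _ _ => Nat.zero_le _)
        (Finset.mem_univ j)
  nlinarith [htj j hj]

theorem exists_val_eq_and_forall_le
    (hMmax : ∀ i, (M i).IsMaximal) (hMinj : Injective M)
    (hvmul : ∀ (i : Fin r) (x y : K), x ≠ 0 → y ≠ 0 → v i (x * y) = v i x + v i y)
    (hvsurj : ∀ (i : Fin r) (n : ℤ), ∃ x : K, x ≠ 0 ∧ v i x = n)
    (hvint : ∀ x : K, x ≠ 0 → (x ∈ integralClosure O K ↔ ∀ i, 0 ≤ v i x))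
    (hvmax : ∀ (i : Fin r) (x : K) (hx : x ∈ integralClosure O K), x ≠ 0 →
      ((⟨x, hx⟩ : integralClosure O K) ∈ M i ↔ 1 ≤ v i x)) (i : Fin r) (w : Fin r → ℤ) :
    ∃ z : K, z ≠ 0 ∧ v i z = w i ∧ ∀ j, w j ≤ v j z := by
  obtain ⟨x, hx0, hxi⟩ := hvsurj i (w i)
  obtain ⟨t, ht0, -, hti, htj⟩ := exists_val_eq_zero_and_one_le hMmax hMinj hvint hvmax i
  obtain ⟨n, hn⟩ := exists_pow_mul_val_ge hvmul ht0 hx0 htj w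
  have hzi : v i (x * t ^ n) = w i := by
    rw [hvmul i _ _ hx0 (pow_ne_zero _ ht0), val_pow (hvmul i) ht0, hti, hxi, mul_zero, add_zero]
  refine ⟨x * t ^ n, mul_ne_zero hx0 (pow_ne_zero _ ht0), hzi, fun j => ?_⟩
  rcases eq_or_ne j i with rfl | hj
  · exact hzi.ge
  · exact hn j hj

theorem exists_forall_le_val
    (hexact : ∀ i (w : Fin r → ℤ), ∃ z : K, z ≠ 0 ∧ v i z = w i ∧ ∀ j, w j ≤ v j z)
    (w : Fin r → ℤ) : ∃ z : K, z ≠ 0 ∧ ∀ j, w j ≤ v j z := by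
  rcases isEmpty_or_nonempty (Fin r) with h | ⟨⟨i⟩⟩
  · exact ⟨1, one_ne_zero, fun j => isEmptyElim j⟩
  · obtain ⟨z, hz0, -, hz⟩ := hexact i w
    exact ⟨z, hz0, hz⟩

variable {A B : Submodule O K} {w : Fin r → ℤ}

theorem eq_integralClosure_of_mem_iff
    (hvint : ∀ x : K, x ≠ 0 → (x ∈ integralClosure O K ↔ ∀ i, 0 ≤ v i x))
    (hA : ∀ z, z ∈ A ↔ z = 0 ∨ ∀ j, 0 ≤ v j z) :
    A = (integralClosure O K).toSubmodule := by
  ext z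
  rcases eq_or_ne z 0 with rfl | hz
  · simp
  simp [hA, hz, hvint z hz]

theorem mul_integralClosure_eq
    (hvmul : ∀ (i : Fin r) (x y : K), x ≠ 0 → y ≠ 0 → v i (x * y) = v i x + v i y)
    (hvint : ∀ x : K, x ≠ 0 → (x ∈ integralClosure O K ↔ ∀ i, 0 ≤ v i x))
    (hA : ∀ z, z ∈ A ↔ z = 0 ∨ ∀ j, w j ≤ v j z) :
    A * (integralClosure O K).toSubmodule = A := by
  refine le_antisymm (Submodule.mul_le.mpr fun x hx y hy => ?_) fun x hx => ?_
  · rcases eq_or_ne x 0 with rfl | hx0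
    · simp
    rcases eq_or_ne y 0 with rfl | hy0
    · simp
    have hvx := ((hA x).mp hx).resolve_left hx0
    have hvy := (hvint y hy0).mp hy
    refine (hA _).mpr (Or.inr fun j => ?_)
    rw [hvmul j x y hx0 hy0]
    linarith [hvx j, hvy j]
  · simpa using Submodule.mul_mem_mul hx ((integralClosure O K).mem_toSubmodule.mpr (one_mem _))

theorem integralClosure_div_eq
    (hvmul : ∀ (i : Fin r) (x y : K), x ≠ 0 → y ≠ 0 → v i (x * y) = v i x + v i y)
    (hvint : ∀ x : K, x ≠ 0 → (x ∈ integralClosure O K ↔ ∀ i, 0 ≤ v i x))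
    (hexact : ∀ i, ∃ z : K, z ≠ 0 ∧ v i z = w i ∧ ∀ j, w j ≤ v j z)
    (hA : ∀ z, z ∈ A ↔ z = 0 ∨ ∀ j, w j ≤ v j z)
    (hB : ∀ z, z ∈ B ↔ z = 0 ∨ ∀ j, -w j ≤ v j z) :
    (integralClosure O K).toSubmodule / A = B := by
  refine le_antisymm (fun x hx => (hB x).mpr ?_) fun x hx => ?_
  · refine or_iff_not_imp_left.mpr fun hx0 i => ?_
    obtain ⟨z, hz0, hzi, hzA⟩ := hexact i
    have := (hvint _ (mul_ne_zero hx0 hz0)).mp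
      (Submodule.mem_div_iff_forall_mul_mem.mp hx z ((hA z).mpr (Or.inr hzA))) i
    rw [hvmul i x z hx0 hz0] at this
    omega
  · refine Submodule.mem_div_iff_forall_mul_mem.mpr fun y hy => ?_
    rcases eq_or_ne x 0 with rfl | hx0
    · simp
    rcases eq_or_ne y 0 with rfl | hy0
    · simp
    have hvx := ((hB x).mp hx).resolve_left hx0
    have hvy := ((hA y).mp hy).resolve_left hy0
    refine (hvint _ (mul_ne_zero hx0 hy0)).mpr fun j => ?_
    rw [hvmul j x y hx0 hy0]
    linarith [hvx j, hvy j]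

theorem div_eq_of_div_integralClosure_eq {c : Submodule O K}
    (hvmul : ∀ (i : Fin r) (x y : K), x ≠ 0 → y ≠ 0 → v i (x * y) = v i x + v i y)
    (hvint : ∀ x : K, x ≠ 0 → (x ∈ integralClosure O K ↔ ∀ i, 0 ≤ v i x))
    (hexact : ∀ i, ∃ z : K, z ≠ 0 ∧ v i z = w i ∧ ∀ j, w j ≤ v j z)
    (hc : c / (integralClosure O K).toSubmodule = (integralClosure O K).toSubmodule)
    (hA : ∀ z, z ∈ A ↔ z = 0 ∨ ∀ j, w j ≤ v j z)
    (hB : ∀ z, z ∈ B ↔ z = 0 ∨ ∀ j, -w j ≤ v j z) :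
    c / A = B := by
  rw [← mul_integralClosure_eq hvmul hvint hA, Submodule.div_mul_eq_div_div, hc,
    integralClosure_div_eq hvmul hvint hexact hA hB]

theorem mul_mem_of_mem_of_mem_maximal
    (hvmul : ∀ (i : Fin r) (x y : K), x ≠ 0 → y ≠ 0 → v i (x * y) = v i x + v i y)
    (hvint : ∀ x : K, x ≠ 0 → (x ∈ integralClosure O K ↔ ∀ i, 0 ≤ v i x))
    (hvmax : ∀ (i : Fin r) (x : K) (hx : x ∈ integralClosure O K), x ≠ 0 →
      ((⟨x, hx⟩ : integralClosure O K) ∈ M i ↔ 1 ≤ v i x)) {i : Fin r}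
    (hA : ∀ z, z ∈ A ↔ z = 0 ∨ ∀ j, w j ≤ v j z)
    (hB : ∀ z, z ∈ B ↔ z = 0 ∨ (w i < v i z ∧ ∀ j, w j ≤ v j z))
    {y : K} (hy : y ∈ A) {u : integralClosure O K} (hu : u ∈ M i) : y * u ∈ B := by
  rcases eq_or_ne y 0 with rfl | hy0
  · simp
  rcases eq_or_ne (u : K) 0 with hu0 | hu0
  · simp [hu0]
  have hvy := ((hA y).mp hy).resolve_left hy0
  have hvu := (hvint u hu0).mp u.2
  have hvui := (hvmax i u u.2 hu0).mp hu
  refine (hB _).mpr (Or.inr ⟨?_, fun j => ?_⟩) <;> rw [hvmul _ y u hy0 hu0]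
  · linarith [hvy i]
  · linarith [hvy j, hvu j]

theorem exists_mul_sub_mem_of_mem
    (hMmax : ∀ i, (M i).IsMaximal) (hMinj : Injective M)
    (hvmul : ∀ (i : Fin r) (x y : K), x ≠ 0 → y ≠ 0 → v i (x * y) = v i x + v i y)
    (hvint : ∀ x : K, x ≠ 0 → (x ∈ integralClosure O K ↔ ∀ i, 0 ≤ v i x))
    (hvmax : ∀ (i : Fin r) (x : K) (hx : x ∈ integralClosure O K), x ≠ 0 →
      ((⟨x, hx⟩ : integralClosure O K) ∈ M i ↔ 1 ≤ v i x)) {i : Fin r}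
    (hA : ∀ z, z ∈ A ↔ z = 0 ∨ ∀ j, w j ≤ v j z)
    (hB : ∀ z, z ∈ B ↔ z = 0 ∨ (w i < v i z ∧ ∀ j, w j ≤ v j z))
    {z : K} (hz0 : z ≠ 0) (hzi : v i z = w i) {y : K} (hy : y ∈ A) :
    ∃ u : integralClosure O K, z * u - y ∈ B := by
  rcases eq_or_ne y 0 with rfl | hy0
  · exact ⟨0, by simp⟩
  obtain ⟨t, ht0, ht1, hti, htj⟩ := exists_val_eq_zero_and_one_le hMmax hMinj hvint hvmax i
  have hyz : y * z⁻¹ ≠ 0 := mul_ne_zero hy0 (inv_ne_zero hz0)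
  obtain ⟨n, hn⟩ := exists_pow_mul_val_ge hvmul ht0 hyz htj 0
  have hu : y * z⁻¹ * t ^ n ∈ integralClosure O K :=
    (hvint _ (mul_ne_zero hyz (pow_ne_zero _ ht0))).mpr fun j => by
      rcases eq_or_ne j i with rfl | hj
      · rw [hvmul j _ _ hyz (pow_ne_zero _ ht0), val_pow (hvmul j) ht0, hti,
          hvmul j _ _ hy0 (inv_ne_zero hz0), val_inv (hvmul j) hz0, hzi]
        linarith [((hA y).mp hy).resolve_left hy0 j]
      · exact hn j hj
  -- `z u = y t ^ n` and `t ^ n ≡ 1` modulo `M i`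
  refine ⟨⟨_, hu⟩, ?_⟩
  have hsub : z * (y * z⁻¹ * t ^ n) - y = y * ((t ^ n - 1 : integralClosure O K) : K) := by
    push_cast
    field_simp
  rw [hsub]
  exact mul_mem_of_mem_of_mem_maximal hvmul hvint hvmax hA hB hy
    ((M i).mem_of_dvd (sub_one_dvd_pow_sub_one t n) ht1)

end ValuationFamily

theorem isFracIdeal_of_mem_iff {O K : Type} [CommRing O] [Field K] [Algebra O K]
    [IsFractionRing O K] {r : ℕ} {v : Fin r → K → ℤ} {A : Submodule O K} {w : Fin r → ℤ}
    (hfin : Module.Finite O (integralClosure O K))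
    (hvmul : ∀ (i : Fin r) (x y : K), x ≠ 0 → y ≠ 0 → v i (x * y) = v i x + v i y)
    (hvint : ∀ x : K, x ≠ 0 → (x ∈ integralClosure O K ↔ ∀ i, 0 ≤ v i x))
    (hexists : ∀ w : Fin r → ℤ, ∃ z : K, z ≠ 0 ∧ ∀ j, w j ≤ v j z)
    (hA : ∀ z, z ∈ A ↔ z = 0 ∨ ∀ j, w j ≤ v j z) :
    IsFracIdeal A := by
  obtain ⟨z, hz0, hz⟩ := hexists w
  obtain ⟨y, hy0, hy⟩ := hexists fun j => -w j
  have hle : A ≤ Submodule.span O {y⁻¹} * (integralClosure O K).toSubmodule := fun x hx => by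
    rcases eq_or_ne x 0 with rfl | hx0
    · exact zero_mem _
    have hvx := ((hA x).mp hx).resolve_left hx0
    have hyx : y * x ∈ (integralClosure O K).toSubmodule := (hvint _ (mul_ne_zero hy0 hx0)).mpr fun j => by
      rw [hvmul j y x hy0 hx0]
      linarith [hy j, hvx j]
    simpa [hy0] using Submodule.mul_mem_mul (Submodule.mem_span_singleton_self y⁻¹) hyx
  have hfrac : IsFractional O⁰ (Submodule.span O {y⁻¹} * (integralClosure O K).toSubmodule) :=
    (isFractional_span_singleton _).mul (isFractional_of_fg (Module.Finite.iff_fg.mp hfin))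
  refine (isFractional_of_le (J := ⟨_, hfrac⟩) hle).isFracIdeal fun h => hz0 ?_
  exact (Submodule.mem_bot O).mp (h ▸ (hA z).mpr (Or.inr hz))

theorem qdim_eq_finrank_quotient_maximal (k : Type) {O K : Type} [Field k] [CommRing O] [Field K]
    [Algebra k O] [Algebra O K] [Algebra k K] [IsScalarTower k O K] {r : ℕ}
    {M : Fin r → Ideal (integralClosure O K)} {v : Fin r → K → ℤ} {A B : Submodule O K}
    {w : Fin r → ℤ} {i : Fin r}
    (hMmax : ∀ i, (M i).IsMaximal) (hMinj : Injective M)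
    (hvmul : ∀ (i : Fin r) (x y : K), x ≠ 0 → y ≠ 0 → v i (x * y) = v i x + v i y)
    (hvsurj : ∀ (i : Fin r) (n : ℤ), ∃ x : K, x ≠ 0 ∧ v i x = n)
    (hvint : ∀ x : K, x ≠ 0 → (x ∈ integralClosure O K ↔ ∀ i, 0 ≤ v i x))
    (hvmax : ∀ (i : Fin r) (x : K) (hx : x ∈ integralClosure O K), x ≠ 0 →
      ((⟨x, hx⟩ : integralClosure O K) ∈ M i ↔ 1 ≤ v i x))
    (hA : ∀ z, z ∈ A ↔ z = 0 ∨ ∀ j, w j ≤ v j z)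
    (hB : ∀ z, z ∈ B ↔ z = 0 ∨ (w i < v i z ∧ ∀ j, w j ≤ v j z)) :
    qdim k A B = Module.finrank k (integralClosure O K ⧸ M i) := by
  obtain ⟨z, hz0, hzi, hzw⟩ := exists_val_eq_and_forall_le hMmax hMinj hvmul hvsurj hvint hvmax i w
  have hzA : z ∈ A := (hA z).mpr (Or.inr hzw)
  refine qdim_eq_finrank_quotient k (z := z)
    (fun u => mul_integralClosure_eq hvmul hvint hA ▸ Submodule.mul_mem_mul hzA u.2)
    (fun u => ⟨fun h => ?_, mul_mem_of_mem_of_mem_maximal hvmul hvint hvmax hA hB hzA⟩)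
    fun y hy => exists_mul_sub_mem_of_mem hMmax hMinj hvmul hvint hvmax hA hB hz0 hzi hy
  rcases eq_or_ne (u : K) 0 with hu0 | hu0
  · simp [ZeroMemClass.coe_eq_zero.mp hu0]
  have := (((hB _).mp h).resolve_left (mul_ne_zero hz0 hu0)).1
  rw [hvmul i z u hz0 hu0, hzi] at this
  exact (hvmax i u u.2 hu0).mpr (by omega)

theorem statement_16_general (k O K : Type) [Field k]
    [CommRing O] [Algebra k O]
    [Field K] [Algebra O K] [IsFractionRing O K] [Algebra k K] [IsScalarTower k O K]
    (hfin : Module.Finite O (integralClosure O K))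
    (OB : Submodule O K) (hOB : OB = Subalgebra.toSubmodule (integralClosure O K))
    (r : ℕ) (M : Fin r → Ideal (integralClosure O K))
    (hMmax : ∀ i, (M i).IsMaximal)
    (hMinj : Function.Injective M)
    (v : Fin r → K → ℤ)
    (hvmul : ∀ (i : Fin r) (x y : K), x ≠ 0 → y ≠ 0 → v i (x * y) = v i x + v i y)
    (hvsurj : ∀ (i : Fin r) (n : ℤ), ∃ x : K, x ≠ 0 ∧ v i x = n)
    (hvint : ∀ x : K, x ≠ 0 → (x ∈ integralClosure O K ↔ ∀ i, 0 ≤ v i x))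
    (hvmax : ∀ (i : Fin r) (x : K) (hx : x ∈ integralClosure O K), x ≠ 0 →
      ((⟨x, hx⟩ : integralClosure O K) ∈ M i ↔ 1 ≤ v i x))
    (d : Fin r → ℕ) (hd : ∀ i, d i = Module.finrank k ((integralClosure O K) ⧸ M i))
    (J : Submodule O K → (Fin r → ℤ) → Submodule O K)
    (hJ : ∀ (a : Submodule O K) (w : Fin r → ℤ) (z : K),
      z ∈ J a w ↔ z ∈ a ∧ (z = 0 ∨ ∀ i, w i ≤ v i z))
    (deg : Submodule O K → ℤ)
    (hdeg0 : deg 1 = 0)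
    (hdegd : ∀ a b : Submodule O K, IsFracIdeal a → IsFracIdeal b → b ≤ a →
      deg a - deg b = qdim k a b)
    (c : Submodule O K) (hcO : c / OB = OB) :
    ∀ w : Fin r → ℤ,
      c / J (⊤ : Submodule O K) w = J (⊤ : Submodule O K) (-w) ∧
      deg (J (⊤ : Submodule O K) w) = (qdim k OB 1 : ℤ) - ∑ i, (d i : ℤ) * w i := by
  subst hOB
  have hJ' (w : Fin r → ℤ) (z : K) : z ∈ J ⊤ w ↔ z = 0 ∨ ∀ j, w j ≤ v j z := by simp [hJ]
  have hexact := exists_val_eq_and_forall_le hMmax hMinj hvmul hvsurj hvint hvmax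
  have hfrac (w : Fin r → ℤ) : IsFracIdeal (J ⊤ w) :=
    isFracIdeal_of_mem_iff hfin hvmul hvint (exists_forall_le_val hexact) (hJ' w)
  have hJ0 : J ⊤ 0 = (integralClosure O K).toSubmodule :=
    eq_integralClosure_of_mem_iff hvint (by simpa using hJ' 0)
  have hdeg_step (w : Fin r → ℤ) (i : Fin r) :
      deg (J ⊤ (w + Pi.single i 1)) + d i = deg (J ⊤ w) := by
    have hB (z : K) :
        z ∈ J ⊤ (w + Pi.single i 1) ↔ z = 0 ∨ (w i < v i z ∧ ∀ j, w j ≤ v j z) := by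
      rw [hJ', forall_add_single_one_le_iff]
    have hle : J ⊤ (w + Pi.single i 1) ≤ J ⊤ w := fun z hz =>
      (hJ' w z).mpr (((hB z).mp hz).imp_right And.right)
    rw [hd, ← qdim_eq_finrank_quotient_maximal k hMmax hMinj hvmul hvsurj hvint hvmax
      (hJ' w) hB, ← hdegd _ _ (hfrac w) (hfrac _) hle]
    ring
  have hinv := eq_of_forall_add_single_one (f := fun w => deg (J ⊤ w) + ∑ i, (d i : ℤ) * w i)
    fun w i => by
      simp only [Pi.add_apply, Pi.single_apply, mul_add, mul_ite, mul_one, mul_zero,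
        Finset.sum_add_distrib, Finset.sum_ite_eq', Finset.mem_univ, if_true, ← hdeg_step w i]
      ring
  have hdeg_zero : deg (J ⊤ 0) = qdim k (integralClosure O K).toSubmodule 1 := by
    rw [← sub_zero (deg _), ← hdeg0, hJ0]
    exact hdegd _ _ (hJ0 ▸ hfrac 0) isFracIdeal_one
      (Submodule.one_le.mpr (integralClosure O K).one_mem)
  intro w
  refine ⟨div_eq_of_div_integralClosure_eq hvmul hvint (hexact · w) hcO (hJ' w)
    fun z => by simp [hJ'], ?_⟩
  simpa [hdeg_zero, eq_sub_iff_add_eq] using hinv w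

theorem statement_16 (k O K : Type) [Field k] [PerfectField k]
    [CommRing O] [IsDomain O] [IsNoetherianRing O] [IsLocalRing O] [Algebra k O]
    [Field K] [Algebra O K] [IsFractionRing O K] [Algebra k K] [IsScalarTower k O K]
    (hdim : ringKrullDim O = 1)
    (hfin : Module.Finite O (integralClosure O K))
    (OB : Submodule O K) (hOB : OB = Subalgebra.toSubmodule (integralClosure O K))
    (r : ℕ) (M : Fin r → Ideal (integralClosure O K))
    (hMmax : ∀ i, (M i).IsMaximal)
    (hMinj : Function.Injective M)
    (hMall : ∀ P : Ideal (integralClosure O K), P.IsMaximal → ∃ i, P = M i)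
    (v : Fin r → K → ℤ)
    (hvmul : ∀ (i : Fin r) (x y : K), x ≠ 0 → y ≠ 0 → v i (x * y) = v i x + v i y)
    (hvadd : ∀ (i : Fin r) (x y : K), x ≠ 0 → y ≠ 0 → x + y ≠ 0 →
      min (v i x) (v i y) ≤ v i (x + y))
    (hvsurj : ∀ (i : Fin r) (n : ℤ), ∃ x : K, x ≠ 0 ∧ v i x = n)
    (hvint : ∀ x : K, x ≠ 0 → (x ∈ integralClosure O K ↔ ∀ i, 0 ≤ v i x))
    (hvmax : ∀ (i : Fin r) (x : K) (hx : x ∈ integralClosure O K), x ≠ 0 →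
      ((⟨x, hx⟩ : integralClosure O K) ∈ M i ↔ 1 ≤ v i x))
    (d : Fin r → ℕ) (hd : ∀ i, d i = Module.finrank k ((integralClosure O K) ⧸ M i))
    (J : Submodule O K → (Fin r → ℤ) → Submodule O K)
    (hJ : ∀ (a : Submodule O K) (w : Fin r → ℤ) (z : K),
      z ∈ J a w ↔ z ∈ a ∧ (z = 0 ∨ ∀ i, w i ≤ v i z))
    (deg : Submodule O K → ℤ)
    (hdeg0 : deg 1 = 0)
    (hdegd : ∀ a b : Submodule O K, IsFracIdeal a → IsFracIdeal b → b ≤ a →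
      deg a - deg b = qdim k a b)
    (c : Submodule O K) (hc : IsCanonicalIdeal c) (hcO : c / OB = OB) :
    ∀ w : Fin r → ℤ,
      c / J (⊤ : Submodule O K) w = J (⊤ : Submodule O K) (-w) ∧
      deg (J (⊤ : Submodule O K) w) = (qdim k OB 1 : ℤ) - ∑ i, (d i : ℤ) * w i :=
  statement_16_general k O K hfin OB hOB r M hMmax hMinj v hvmul hvsurj hvint hvmax d hd J hJ deg
    hdeg0 hdegd c hcO
end
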